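/- arXiv:2010.03748 — 2 statements merged into one kernel-verified Lean document; each statement's English description precedes it below -/
import Mathlib

section
/- Let G be a finite simple connected graph of order n, size m, maximum degree Δ, with p pendent vertices and minimum non-pendent vertex degree δ₁. Then AG(G) ≤ p(Δ+1)/(2√Δ) + (1/(2δ₁))·√(F(G) + 2M₂(G) − p(δ₁+1)² + 4Δ²(m−p)(m−p−1)), with equality if and only if G is isomorphic to the star K_{1,n−1}, or G is regular, or G is (Δ,1)-semiregular. -/
open SimpleGraph

/-- The degree of a vertex, as a natural number (classical, to avoid decidability assumptions). -/
noncomputable def ndeg {V : Type*} [Fintype V] (G : SimpleGraph V) (v : V) : ℕ :=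
  letI := Classical.decRel G.Adj
  G.degree v

/-- The degree of a vertex, as a real number. -/
noncomputable def deg {V : Type*} [Fintype V] (G : SimpleGraph V) (v : V) : ℝ :=
  (ndeg G v : ℝ)

/-- For a symmetric function `f`, `edgeSum G f = Σ_{uv ∈ E(G)} f (d_u) (d_v)`:
each unordered edge is counted twice in the double sum, hence the factor `1/2`. -/
noncomputable def edgeSum {V : Type*} [Fintype V] (G : SimpleGraph V) (f : ℝ → ℝ → ℝ) : ℝ :=
  letI := Classical.decRel G.Adj
  (1 / 2) * ∑ u : V, ∑ w : V, if G.Adj u w then f (deg G u) (deg G w) else 0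

/-- The arithmetic-geometric index `AG(G) = Σ_{uv ∈ E(G)} (1/2)(√(d_u/d_v) + √(d_v/d_u))`. -/
noncomputable def AG {V : Type*} [Fintype V] (G : SimpleGraph V) : ℝ :=
  edgeSum G (fun x y => (Real.sqrt (x / y) + Real.sqrt (y / x)) / 2)

/-- The first geometric-arithmetic index `GA(G) = Σ_{uv ∈ E(G)} 2√(d_u d_v)/(d_u + d_v)`. -/
noncomputable def GA {V : Type*} [Fintype V] (G : SimpleGraph V) : ℝ :=
  edgeSum G (fun x y => 2 * Real.sqrt (x * y) / (x + y))

/-- The forgotten index `F(G) = Σ_{uv ∈ E(G)} (d_u² + d_v²)`. -/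
noncomputable def forgottenIndex {V : Type*} [Fintype V] (G : SimpleGraph V) : ℝ :=
  edgeSum G (fun x y => x ^ 2 + y ^ 2)

/-- The first Zagreb index `M₁(G) = Σ_{uv ∈ E(G)} (d_u + d_v)`. -/
noncomputable def M1 {V : Type*} [Fintype V] (G : SimpleGraph V) : ℝ :=
  edgeSum G (fun x y => x + y)

/-- The second Zagreb index `M₂(G) = Σ_{uv ∈ E(G)} d_u d_v`. -/
noncomputable def M2 {V : Type*} [Fintype V] (G : SimpleGraph V) : ℝ :=
  edgeSum G (fun x y => x * y)

/-- The symmetric division deg index `SDD(G) = Σ_{uv ∈ E(G)} (d_u/d_v + d_v/d_u)`. -/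
noncomputable def SDD {V : Type*} [Fintype V] (G : SimpleGraph V) : ℝ :=
  edgeSum G (fun x y => x / y + y / x)

/-- The atom-bond connectivity index `ABC(G) = Σ_{uv ∈ E(G)} √((d_u + d_v − 2)/(d_u d_v))`. -/
noncomputable def ABC {V : Type*} [Fintype V] (G : SimpleGraph V) : ℝ :=
  edgeSum G (fun x y => Real.sqrt ((x + y - 2) / (x * y)))

/-- `G` is `(s,r)`-semiregular: its vertex set is the disjoint union of two nonempty sets,
all vertices of the first having degree `s` and all vertices of the second degree `r`. -/
def IsSemiregular {V : Type*} [Fintype V] (G : SimpleGraph V) (s r : ℕ) : Prop :=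
  ∃ V₁ V₂ : Set V, V₁.Nonempty ∧ V₂.Nonempty ∧ Disjoint V₁ V₂ ∧ V₁ ∪ V₂ = Set.univ ∧
    (∀ v ∈ V₁, ndeg G v = s) ∧ (∀ v ∈ V₂, ndeg G v = r)

lemma pend_local {a D : ℝ} (ha : 1 ≤ a) (haD : a ≤ D) (hD : 2 ≤ D) :
    (Real.sqrt (1 / a) + Real.sqrt (a / 1)) / 2 ≤ (D + 1) / (2 * Real.sqrt D) ∧
    ((Real.sqrt (1 / a) + Real.sqrt (a / 1)) / 2 = (D + 1) / (2 * Real.sqrt D) ↔ a = D) := by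
  have ha0 : (0:ℝ) < a := by linarith
  have hD0 : (0:ℝ) < D := by linarith
  set x := Real.sqrt a with hx
  set y := Real.sqrt D with hy
  have hx1 : 1 ≤ x := by rw [hx]; nlinarith [Real.sq_sqrt ha0.le, Real.sqrt_nonneg a]
  have hxy : x ≤ y := Real.sqrt_le_sqrt haD
  have hy1 : 1 ≤ y := le_trans hx1 hxy
  have hx2 : x ^ 2 = a := Real.sq_sqrt ha0.le
  have hy2 : y ^ 2 = D := Real.sq_sqrt hD0.le
  have hxy1 : 1 < x * y := by nlinarith
  have hx0 : 0 < x := by linarith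
  have hy0 : 0 < y := by linarith
  have hsa : Real.sqrt (1/a) = 1 / x := by rw [hx, one_div, one_div, Real.sqrt_inv]
  have hsa2 : Real.sqrt (a / 1) = x := by rw [div_one]
  have e1 : (Real.sqrt (1 / a) + Real.sqrt (a / 1)) / 2 = (1 + x^2) / (2*x) := by
    rw [hsa, hsa2]; field_simp
  have e2 : (D + 1) / (2 * y) = (y^2 + 1) / (2*y) := by rw [hy2]
  rw [e1, e2]
  constructor
  · rw [div_le_div_iff₀ (by positivity) (by positivity)]
    nlinarith [mul_nonneg (by linarith : (0:ℝ) ≤ y - x) (by linarith : (0:ℝ) ≤ x*y - 1)]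
  · rw [div_eq_div_iff (by positivity) (by positivity)]
    constructor
    · intro h
      have hxy' : x = y := by nlinarith
      rw [← hx2, ← hy2, hxy']
    · intro h
      have : x = y := by rw [hx, hy, h]
      rw [this]; ring

lemma np_local {a b d : ℝ} (hd : 2 ≤ d) (hab : d ≤ a) (hbd : d ≤ b) :
    (Real.sqrt (a / b) + Real.sqrt (b / a)) / 2 ≤ (a + b) / (2 * d) ∧
    ((Real.sqrt (a / b) + Real.sqrt (b / a)) / 2 = (a + b) / (2 * d) ↔ a = d ∧ b = d) := by
  have ha0 : (0:ℝ) < a := by linarith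
  have hb0 : (0:ℝ) < b := by linarith
  have hd0 : (0:ℝ) < d := by linarith
  set s := Real.sqrt a with hs
  set t := Real.sqrt b with ht
  have hs2 : s ^ 2 = a := Real.sq_sqrt ha0.le
  have ht2 : t ^ 2 = b := Real.sq_sqrt hb0.le
  have hs0 : 0 < s := Real.sqrt_pos.mpr ha0
  have ht0 : 0 < t := Real.sqrt_pos.mpr hb0
  have hst : d ≤ s * t := by
    have : Real.sqrt (d^2) ≤ Real.sqrt (a*b) := Real.sqrt_le_sqrt (by nlinarith)
    rwa [Real.sqrt_sq hd0.le, Real.sqrt_mul ha0.le, ← hs, ← ht] at this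
  have e1 : (Real.sqrt (a / b) + Real.sqrt (b / a)) / 2 = (s^2 + t^2) / (2*(s*t)) := by
    rw [Real.sqrt_div ha0.le, Real.sqrt_div hb0.le, ← hs, ← ht]
    field_simp
  have e2 : (a + b) = (s^2 + t^2) := by rw [hs2, ht2]
  rw [e1, e2]
  have hnum : (0:ℝ) < s^2 + t^2 := by positivity
  constructor
  · rw [div_le_div_iff₀ (by positivity) (by positivity)]
    nlinarith
  · rw [div_eq_div_iff (by positivity) (by positivity)]
    constructor
    · intro h
      have hstd : s * t = d := by nlinarith
      have hab2 : a * b = d^2 := by rw [← hs2, ← ht2]; nlinarith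
      constructor
      · have : a ≤ d := by nlinarith
        linarith
      · have : b ≤ d := by nlinarith
        linarith
    · rintro ⟨h1, h2⟩
      have : s * t = d := by
        rw [hs, ht, h1, h2, ← Real.sqrt_mul hd0.le, Real.sqrt_mul_self hd0.le]
      rw [this]

lemma sq_pend {c b : ℝ} (h2 : 2 ≤ c) (hb : c ≤ b) :
    (c+1)^2 ≤ (1+b)^2 ∧ ((c+1)^2 = (1+b)^2 ↔ b = c) := by
  constructor
  · nlinarith
  · constructor
    · intro h; nlinarith
    · intro h; rw [h]; ring

/-! ### Cauchy-type cross-term lemmas -/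

section Cross
variable {ι : Type*} [DecidableEq ι] {s : Finset ι} {f : ι → ℝ} {B : ℝ}

lemma cross_id (s : Finset ι) (f : ι → ℝ) :
    (∑ i ∈ s, f i)^2 = ∑ i ∈ s, (f i)^2 + ∑ i ∈ s, ∑ j ∈ s.erase i, f i * f j := by
  rw [sq, Finset.sum_mul_sum]
  rw [← Finset.sum_add_distrib]
  refine Finset.sum_congr rfl fun i hi => ?_
  rw [← Finset.add_sum_erase _ _ hi, sq]

lemma cross_le (h0 : ∀ i ∈ s, 0 ≤ f i) (hB : ∀ i ∈ s, f i ≤ B) :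
    ∑ i ∈ s, ∑ j ∈ s.erase i, f i * f j ≤ B^2 * s.card * (s.card - 1) := by
  have key : ∀ i ∈ s, ∑ j ∈ s.erase i, f i * f j ≤ B^2 * (s.card - 1) := by
    intro i hi
    have hc : ((s.erase i).card : ℝ) = (s.card : ℝ) - 1 := by
      rw [Finset.card_erase_of_mem hi, Nat.cast_sub (Finset.card_pos.mpr ⟨i, hi⟩)]
      simp
    calc ∑ j ∈ s.erase i, f i * f j ≤ ∑ j ∈ s.erase i, B^2 := by
          refine Finset.sum_le_sum fun j hj => ?_
          have hj' := Finset.mem_of_mem_erase hj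
          have := h0 i hi; have := h0 j hj'; have := hB i hi; have := hB j hj'
          nlinarith
      _ = B^2 * (s.card - 1) := by rw [Finset.sum_const, nsmul_eq_mul, hc, mul_comm]
  calc ∑ i ∈ s, ∑ j ∈ s.erase i, f i * f j ≤ ∑ i ∈ s, B^2 * (s.card - 1) :=
        Finset.sum_le_sum key
    _ = B^2 * s.card * (s.card - 1) := by rw [Finset.sum_const, nsmul_eq_mul]; ring

lemma cross_lt (h0 : ∀ i ∈ s, 0 ≤ f i) (hB : ∀ i ∈ s, f i ≤ B) (hB0 : 0 < B)
    (hcard : 2 ≤ s.card) (hex : ∃ i ∈ s, f i < B) :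
    ∑ i ∈ s, ∑ j ∈ s.erase i, f i * f j < B^2 * s.card * (s.card - 1) := by
  obtain ⟨i0, hi0, hfi0⟩ := hex
  have hc : ∀ i ∈ s, ((s.erase i).card : ℝ) = (s.card : ℝ) - 1 := by
    intro i hi
    rw [Finset.card_erase_of_mem hi, Nat.cast_sub (Finset.card_pos.mpr ⟨i, hi⟩)]
    simp
  have key : ∀ i ∈ s, ∑ j ∈ s.erase i, f i * f j ≤ B^2 * (s.card - 1) := by
    intro i hi
    calc ∑ j ∈ s.erase i, f i * f j ≤ ∑ j ∈ s.erase i, B^2 := by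
          refine Finset.sum_le_sum fun j hj => ?_
          have hj' := Finset.mem_of_mem_erase hj
          have := h0 i hi; have := h0 j hj'; have := hB i hi; have := hB j hj'
          nlinarith
      _ = B^2 * (s.card - 1) := by rw [Finset.sum_const, nsmul_eq_mul, hc i hi, mul_comm]
  have keystrict : ∑ j ∈ s.erase i0, f i0 * f j < B^2 * (s.card - 1) := by
    have hne : (s.erase i0).Nonempty := by
      rw [← Finset.card_pos, Finset.card_erase_of_mem hi0]
      omega
    calc ∑ j ∈ s.erase i0, f i0 * f j < ∑ j ∈ s.erase i0, B^2 := by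
          refine Finset.sum_lt_sum_of_nonempty hne fun j hj => ?_
          have hj' := Finset.mem_of_mem_erase hj
          have := h0 i0 hi0; have := h0 j hj'; have := hB j hj'
          nlinarith
      _ = B^2 * (s.card - 1) := by rw [Finset.sum_const, nsmul_eq_mul, hc i0 hi0, mul_comm]
  calc ∑ i ∈ s, ∑ j ∈ s.erase i, f i * f j
      < ∑ i ∈ s, B^2 * (s.card - 1) := Finset.sum_lt_sum key ⟨i0, hi0, keystrict⟩
    _ = B^2 * s.card * (s.card - 1) := by rw [Finset.sum_const, nsmul_eq_mul]; ring

lemma cross_eq (heq : 2 ≤ s.card → ∀ i ∈ s, f i = B) :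
    ∑ i ∈ s, ∑ j ∈ s.erase i, f i * f j = B^2 * s.card * (s.card - 1) := by
  rcases Nat.lt_or_ge s.card 2 with h | h
  · interval_cases hh : s.card
    · have : s = ∅ := Finset.card_eq_zero.mp hh
      subst this; simp
    · obtain ⟨a, ha⟩ := Finset.card_eq_one.mp hh
      subst ha; simp
  · have hB := heq h
    have : ∀ i ∈ s, ∑ j ∈ s.erase i, f i * f j = B^2 * (s.card - 1) := by
      intro i hi
      have hc : ((s.erase i).card : ℝ) = (s.card : ℝ) - 1 := by
        rw [Finset.card_erase_of_mem hi, Nat.cast_sub (Finset.card_pos.mpr ⟨i, hi⟩)]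
        simp
      calc ∑ j ∈ s.erase i, f i * f j = ∑ j ∈ s.erase i, B^2 := by
            refine Finset.sum_congr rfl fun j hj => ?_
            rw [hB i hi, hB j (Finset.mem_of_mem_erase hj), sq]
        _ = B^2 * (s.card - 1) := by rw [Finset.sum_const, nsmul_eq_mul, hc, mul_comm]
    rw [Finset.sum_congr rfl this, Finset.sum_const, nsmul_eq_mul]; ring

end Cross

/-! ### Graph helpers -/

lemma reach_closed {V : Type*} {G : SimpleGraph V} {s : Set V}
    (hs : ∀ a ∈ s, ∀ b, G.Adj a b → b ∈ s) {a b : V} (h : G.Reachable a b) (ha : a ∈ s) :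
    b ∈ s := by
  obtain ⟨w⟩ := h
  induction w with
  | nil => exact ha
  | cons h p ih => exact ih (hs _ ha _ h)

lemma sym_half {α : Type*} {M : Type*} [AddCommMonoid M] [LinearOrder α]
    (t : Finset (α × α)) (ht : ∀ e ∈ t, e.swap ∈ t) (hirr : ∀ e ∈ t, e.1 ≠ e.2)
    (g : α × α → M) (hg : ∀ e ∈ t, g e.swap = g e) :
    ∑ e ∈ t, g e =
      (∑ e ∈ t.filter (fun e => e.1 < e.2), g e) +
      (∑ e ∈ t.filter (fun e => e.1 < e.2), g e) := by
  conv_lhs => rw [← Finset.sum_filter_add_sum_filter_not t (fun e => e.1 < e.2)]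
  congr 1
  refine Finset.sum_bij' (fun e _ => e.swap) (fun e _ => e.swap) ?_ ?_ ?_ ?_ ?_
  · intro e he
    rw [Finset.mem_filter] at he ⊢
    exact ⟨ht e he.1, lt_of_le_of_ne (not_lt.mp he.2) (Ne.symm (hirr e he.1))⟩
  · intro e he
    rw [Finset.mem_filter] at he ⊢
    exact ⟨ht e he.1, not_lt.mpr (le_of_lt he.2)⟩
  · intro e _; simp
  · intro e _; simp
  · intro e he
    rw [Finset.mem_filter] at he
    exact (hg e he.1).symm

section Helpers
variable {V : Type*} [Fintype V] [DecidableEq V] (G : SimpleGraph V) [DecidableRel G.Adj]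

lemma ndeg_eq (v : V) : ndeg G v = G.degree v := by
  unfold ndeg; congr!

lemma deg_def (v : V) : deg G v = (ndeg G v : ℝ) := rfl

noncomputable def A2 : Finset (V × V) := Finset.univ.filter fun e => G.Adj e.1 e.2

lemma mem_A2 (e : V × V) : e ∈ A2 G ↔ G.Adj e.1 e.2 := by simp [A2]

lemma edgeSum_eq (f : ℝ → ℝ → ℝ) :
    edgeSum G f = (1/2) * ∑ e ∈ A2 G, f (deg G e.1) (deg G e.2) := by
  unfold edgeSum A2
  rw [Finset.sum_filter, Fintype.sum_prod_type]
  congr!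

lemma card_A2 : (A2 G).card = 2 * G.edgeFinset.card := by
  rw [← G.sum_degrees_eq_twice_card_edges]
  unfold A2
  rw [Finset.card_filter, Fintype.sum_prod_type]
  refine Finset.sum_congr rfl fun u _ => ?_
  rw [← Finset.card_filter, ← neighborFinset_eq_filter, degree]

noncomputable def Pa : Finset (V × V) := (A2 G).filter (fun e => ndeg G e.1 = 1)
noncomputable def Pb : Finset (V × V) := (A2 G).filter (fun e => ndeg G e.2 = 1)
noncomputable def P2 : Finset (V × V) := (A2 G).filter (fun e => ndeg G e.1 = 1 ∨ ndeg G e.2 = 1)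
noncomputable def N2 : Finset (V × V) := (A2 G).filter (fun e => ¬(ndeg G e.1 = 1 ∨ ndeg G e.2 = 1))

lemma mem_Pa (e : V × V) : e ∈ Pa G ↔ G.Adj e.1 e.2 ∧ ndeg G e.1 = 1 := by
  simp [Pa, A2]

lemma mem_Pb (e : V × V) : e ∈ Pb G ↔ G.Adj e.1 e.2 ∧ ndeg G e.2 = 1 := by
  simp [Pb, A2]

lemma mem_P2 (e : V × V) : e ∈ P2 G ↔ G.Adj e.1 e.2 ∧ (ndeg G e.1 = 1 ∨ ndeg G e.2 = 1) := by
  simp [P2, A2]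

lemma mem_N2 (e : V × V) : e ∈ N2 G ↔ G.Adj e.1 e.2 ∧ ndeg G e.1 ≠ 1 ∧ ndeg G e.2 ≠ 1 := by
  simp only [N2, A2, Finset.mem_filter, Finset.mem_univ, true_and, not_or]

lemma card_Pa : (Pa G).card = (Finset.univ.filter fun v => ndeg G v = 1).card := by
  unfold Pa A2
  rw [Finset.filter_filter, Finset.card_filter, Fintype.sum_prod_type]
  have h1 : ∀ u : V, (∑ w : V, if (G.Adj (u, w).1 (u, w).2 ∧ ndeg G (u, w).1 = 1) then 1 else 0)
      = if ndeg G u = 1 then G.degree u else 0 := by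
    intro u
    by_cases h : ndeg G u = 1
    · simp only [h, and_true, if_true]
      rw [degree, neighborFinset_eq_filter, Finset.card_filter]
    · simp [h]
  rw [Finset.sum_congr rfl fun u _ => h1 u]
  rw [Finset.card_filter]
  refine Finset.sum_congr rfl fun u _ => ?_
  by_cases h : ndeg G u = 1
  · simp [h, ← ndeg_eq G u]
  · simp [h]

lemma card_Pb : (Pb G).card = (Pa G).card := by
  refine Finset.card_bij' (fun e _ => e.swap) (fun e _ => e.swap) ?_ ?_ ?_ ?_
  · intro e he
    rw [mem_Pb] at he; rw [mem_Pa]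
    exact ⟨he.1.symm, he.2⟩
  · intro e he
    rw [mem_Pa] at he; rw [mem_Pb]
    exact ⟨he.1.symm, he.2⟩
  · intro e _; simp
  · intro e _; simp

lemma card_P2 (hnb : ∀ e ∈ A2 G, ¬(ndeg G e.1 = 1 ∧ ndeg G e.2 = 1)) :
    (P2 G).card = 2 * (Finset.univ.filter fun v => ndeg G v = 1).card := by
  have : P2 G = Pa G ∪ Pb G := by
    unfold P2 Pa Pb; rw [Finset.filter_or]
  rw [this, Finset.card_union_of_disjoint, card_Pa, card_Pb, card_Pa]; · ring
  unfold Pa Pb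
  rw [Finset.disjoint_filter]
  intro e he h1 h2
  exact hnb e he ⟨h1, h2⟩

lemma sum_split (g : V × V → ℝ) :
    ∑ e ∈ A2 G, g e = (∑ e ∈ P2 G, g e) + (∑ e ∈ N2 G, g e) :=
  (Finset.sum_filter_add_sum_filter_not (A2 G) _ g).symm

end Helpers

set_option maxHeartbeats 1000000

/-- Theorem 2 of the paper: upper bound on `AG` and characterization of equality. -/
theorem stmt2 {V : Type*} [Fintype V] (G : SimpleGraph V) (hG : G.Connected)
    (n m p Δ δ₁ : ℕ)
    (hn : Fintype.card V = n) (hm : G.edgeSet.ncard = m)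
    (hp : {v : V | ndeg G v = 1}.ncard = p)
    (hΔ : IsGreatest (Set.range (ndeg G)) Δ)
    (hδ₁ : IsLeast {d : ℕ | ∃ v : V, ndeg G v = d ∧ 2 ≤ d} δ₁) :
    AG G ≤ (p : ℝ) * ((Δ : ℝ) + 1) / (2 * Real.sqrt Δ) +
      (1 / (2 * (δ₁ : ℝ))) *
        Real.sqrt (forgottenIndex G + 2 * M2 G - p * ((δ₁ : ℝ) + 1) ^ 2 +
          4 * (Δ : ℝ) ^ 2 * ((m : ℝ) - p) * ((m : ℝ) - p - 1)) ∧
    (AG G = (p : ℝ) * ((Δ : ℝ) + 1) / (2 * Real.sqrt Δ) +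
      (1 / (2 * (δ₁ : ℝ))) *
        Real.sqrt (forgottenIndex G + 2 * M2 G - p * ((δ₁ : ℝ) + 1) ^ 2 +
          4 * (Δ : ℝ) ^ 2 * ((m : ℝ) - p) * ((m : ℝ) - p - 1)) ↔
      Nonempty (G ≃g completeBipartiteGraph (Fin 1) (Fin (n - 1))) ∨
      (∃ r, ∀ v : V, ndeg G v = r) ∨ IsSemiregular G Δ 1) := by
  classical
  obtain ⟨⟨v₀, hv₀, hδ2⟩, hδle⟩ := hδ₁
  obtain ⟨hΔmem, hΔub⟩ := hΔ
  have hdΔ : ∀ v, ndeg G v ≤ Δ := fun v => hΔub ⟨v, rfl⟩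
  have hΔ2 : 2 ≤ Δ := hδ2.trans (hv₀ ▸ hdΔ v₀)
  -- every vertex has degree ≥ 1
  have hd1 : ∀ v, 1 ≤ ndeg G v := by
    intro v
    by_contra hlt
    have h0 : G.degree v = 0 := by rw [← ndeg_eq]; omega
    have hcl : ∀ a ∈ ({v} : Set V), ∀ b, G.Adj a b → b ∈ ({v} : Set V) := by
      intro a ha b hab
      rw [Set.mem_singleton_iff] at ha
      subst ha
      exfalso
      have hb : b ∈ G.neighborFinset a := (G.mem_neighborFinset a b).mpr hab
      rw [Finset.card_eq_zero.mp h0] at hb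
      exact absurd hb (Finset.notMem_empty b)
    have hv₀v := reach_closed hcl (hG.preconnected v v₀) rfl
    rw [Set.mem_singleton_iff] at hv₀v
    rw [hv₀v] at hv₀
    rw [← ndeg_eq] at h0
    omega
  have hδle' : ∀ v, ndeg G v ≠ 1 → δ₁ ≤ ndeg G v := fun v h =>
    hδle ⟨v, rfl, by have := hd1 v; omega⟩
  have uniq : ∀ x, ndeg G x = 1 → ∀ b c, G.Adj x b → G.Adj x c → b = c := by
    intro x hx b c hb hc
    have hcard : G.degree x = 1 := by rw [← ndeg_eq]; exact hx
    obtain ⟨a, ha⟩ := Finset.card_eq_one.mp hcard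
    have h1 : b ∈ G.neighborFinset x := (G.mem_neighborFinset x b).mpr hb
    have h2 : c ∈ G.neighborFinset x := (G.mem_neighborFinset x c).mpr hc
    rw [ha, Finset.mem_singleton] at h1 h2
    rw [h1, h2]
  have hsupp : ∀ u w, G.Adj u w → ndeg G u = 1 → 2 ≤ ndeg G w := by
    intro u w huw h1
    by_contra hlt
    have hw1 : ndeg G w = 1 := by have := hd1 w; omega
    have hcl : ∀ a ∈ ({u, w} : Set V), ∀ b, G.Adj a b → b ∈ ({u, w} : Set V) := by
      intro a ha b hab
      rcases ha with rfl | ha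
      · exact Or.inr (by rw [Set.mem_singleton_iff]; exact uniq a h1 b w hab huw)
      · rw [Set.mem_singleton_iff] at ha
        subst ha
        exact Or.inl (uniq a hw1 b u hab huw.symm)
    have hv₀m := reach_closed hcl (hG.preconnected u v₀) (Or.inl rfl)
    rcases hv₀m with rfl | hv₀m
    · omega
    · rw [Set.mem_singleton_iff] at hv₀m
      subst hv₀m
      omega
  have hexadj : ∀ v : V, ∃ w, G.Adj v w := by
    intro v
    have : 0 < G.degree v := by rw [← ndeg_eq]; have := hd1 v; omega
    exact (G.degree_pos_iff_exists_adj v).mp this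
  -- real versions
  have hd1R : ∀ v, (1:ℝ) ≤ deg G v := fun v => by
    rw [deg_def]; exact_mod_cast hd1 v
  have hdΔR : ∀ v, deg G v ≤ (Δ:ℝ) := fun v => by
    rw [deg_def]; exact_mod_cast hdΔ v
  have hΔR : (2:ℝ) ≤ (Δ:ℝ) := by exact_mod_cast hΔ2
  have hδR : (2:ℝ) ≤ (δ₁:ℝ) := by exact_mod_cast hδ2
  have hδleR : ∀ v, ndeg G v ≠ 1 → (δ₁:ℝ) ≤ deg G v := fun v h => by
    rw [deg_def]; exact_mod_cast hδle' v h
  -- counting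
  rw [← coe_edgeFinset, Set.ncard_coe_finset] at hm
  have hp' : (Finset.univ.filter fun v => ndeg G v = 1).card = p := by
    rw [← hp, show {v : V | ndeg G v = 1} = ↑(Finset.univ.filter fun v => ndeg G v = 1) from
      by ext v; simp, Set.ncard_coe_finset]
  have hcardA2 : (A2 G).card = 2 * m := by rw [card_A2, hm]
  have hnb : ∀ e ∈ A2 G, ¬(ndeg G e.1 = 1 ∧ ndeg G e.2 = 1) := by
    rintro e he ⟨h1, h2⟩
    have := hsupp e.1 e.2 ((mem_A2 G e).mp he) h1
    omega
  have hcardP2 : (P2 G).card = 2 * p := by rw [card_P2 G hnb, hp']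
  letI : LinearOrder V := LinearOrder.lift' (fun v => (Fintype.equivFin V) v)
    (Fintype.equivFin V).injective
  set N1 : Finset (V × V) := (N2 G).filter (fun e => e.1 < e.2) with hN1def
  have hswap : ∀ e ∈ N2 G, e.swap ∈ N2 G := by
    intro e he
    rw [mem_N2] at he ⊢
    exact ⟨he.1.symm, he.2.2, he.2.1⟩
  have hirr : ∀ e ∈ N2 G, e.1 ≠ e.2 := fun e he => G.ne_of_adj ((mem_N2 G e).mp he).1
  have hcardN2 : (N2 G).card = N1.card + N1.card := by
    have h := sym_half (N2 G) hswap hirr (fun _ => (1:ℕ)) (fun _ _ => rfl)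
    rwa [← Finset.card_eq_sum_ones, ← Finset.card_eq_sum_ones, ← hN1def] at h
  have hsplitc : (P2 G).card + (N2 G).card = (A2 G).card := by
    unfold P2 N2
    exact Finset.card_filter_add_card_filter_not _
  have hpm : p + N1.card = m := by omega
  have hqR : (N1.card : ℝ) = (m:ℝ) - p := by
    have h : (p:ℝ) + (N1.card:ℝ) = (m:ℝ) := by exact_mod_cast hpm
    linarith
  -- abbreviations
  obtain ⟨Φ, hΦ⟩ : ∃ Φ : V × V → ℝ, ∀ e, Φ e =
      (Real.sqrt (deg G e.1 / deg G e.2) + Real.sqrt (deg G e.2 / deg G e.1)) / 2 :=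
    ⟨_, fun _ => rfl⟩
  obtain ⟨W, hW⟩ : ∃ W : V × V → ℝ, ∀ e, W e = deg G e.1 + deg G e.2 := ⟨_, fun _ => rfl⟩
  have hsplitAG : AG G = 1/2 * ((∑ e ∈ P2 G, Φ e) + (∑ e ∈ N2 G, Φ e)) := by
    rw [AG, edgeSum_eq, sum_split]
    simp only [hΦ]
  have hFM : forgottenIndex G + 2 * M2 G =
      1/2 * ((∑ e ∈ P2 G, (W e)^2) + (∑ e ∈ N2 G, (W e)^2)) := by
    rw [forgottenIndex, M2, edgeSum_eq, edgeSum_eq, ← sum_split]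
    have key : (∑ e ∈ A2 G, ((deg G e.1)^2 + (deg G e.2)^2)) +
        2 * (∑ e ∈ A2 G, (deg G e.1 * deg G e.2)) = ∑ e ∈ A2 G, (W e)^2 := by
      rw [Finset.mul_sum, ← Finset.sum_add_distrib]
      exact Finset.sum_congr rfl fun e _ => by rw [hW]; ring
    rw [← key]
    ring
  -- Step 1 : pendent edges
  have key1 : ∀ u w, G.Adj u w → ndeg G u = 1 →
      (Φ (u,w) ≤ ((Δ:ℝ)+1)/(2*Real.sqrt Δ) ∧
       (Φ (u,w) = ((Δ:ℝ)+1)/(2*Real.sqrt Δ) ↔ ndeg G w = Δ)) := by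
    intro u w huw h1
    have h1R : deg G u = 1 := by rw [deg_def, h1, Nat.cast_one]
    obtain ⟨hle, hiff⟩ := pend_local (hd1R w) (hdΔR w) hΔR
    have hΦuw : Φ (u,w) = (Real.sqrt (1 / deg G w) + Real.sqrt (deg G w / 1)) / 2 := by
      rw [hΦ]; dsimp only; rw [h1R]
    have hcast : deg G w = (Δ:ℝ) ↔ ndeg G w = Δ := by rw [deg_def]; exact Nat.cast_inj
    exact ⟨hΦuw ▸ hle, by rw [hΦuw, hiff]; exact hcast⟩
  have hΦsym : ∀ u w, Φ (u,w) = Φ (w,u) := by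
    intro u w; rw [hΦ, hΦ]; dsimp only; ring
  have hΦe : ∀ e : V × V, Φ e = Φ (e.1, e.2) := by intro e; rw [Prod.mk.eta]
  have hper1 : ∀ e ∈ P2 G, Φ e ≤ ((Δ:ℝ)+1)/(2*Real.sqrt Δ) := by
    intro e he
    rw [mem_P2] at he
    rcases he.2 with h | h
    · rw [hΦe]; exact (key1 e.1 e.2 he.1 h).1
    · rw [hΦe, hΦsym]; exact (key1 e.2 e.1 he.1.symm h).1
  have hs1const : ∑ _e ∈ P2 G, ((Δ:ℝ)+1)/(2*Real.sqrt Δ) =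
      (2*(p:ℝ)) * (((Δ:ℝ)+1)/(2*Real.sqrt Δ)) := by
    rw [Finset.sum_const, hcardP2, nsmul_eq_mul]
    push_cast; ring
  have hsum1 : ∑ e ∈ P2 G, Φ e ≤ (2*(p:ℝ)) * (((Δ:ℝ)+1)/(2*Real.sqrt Δ)) := by
    rw [← hs1const]; exact Finset.sum_le_sum hper1
  have hs1iff : (∑ e ∈ P2 G, Φ e = (2*(p:ℝ)) * (((Δ:ℝ)+1)/(2*Real.sqrt Δ))) ↔
      (∀ u w, G.Adj u w → ndeg G u = 1 → ndeg G w = Δ) := by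
    rw [← hs1const, Finset.sum_eq_sum_iff_of_le hper1]
    constructor
    · intro h u w huw h1
      refine (key1 u w huw h1).2.mp ?_
      exact h (u,w) ((mem_P2 G (u,w)).mpr ⟨huw, Or.inl h1⟩)
    · intro hCp e he
      rw [mem_P2] at he
      rcases he.2 with h | h
      · rw [hΦe]; exact (key1 e.1 e.2 he.1 h).2.mpr (hCp e.1 e.2 he.1 h)
      · rw [hΦe, hΦsym]; exact (key1 e.2 e.1 he.1.symm h).2.mpr (hCp e.2 e.1 he.1.symm h)
  -- Step 2 : non-pendent edges, AG-local bound
  have key2 : ∀ u w, G.Adj u w → ndeg G u ≠ 1 → ndeg G w ≠ 1 →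
      (Φ (u,w) ≤ W (u,w) / (2*(δ₁:ℝ)) ∧
       (Φ (u,w) = W (u,w) / (2*(δ₁:ℝ)) ↔ ndeg G u = δ₁ ∧ ndeg G w = δ₁)) := by
    intro u w huw hu hw
    obtain ⟨hle, hiff⟩ := np_local hδR (hδleR u hu) (hδleR w hw)
    have hΦuw : Φ (u,w) = (Real.sqrt (deg G u / deg G w) + Real.sqrt (deg G w / deg G u)) / 2 := by
      rw [hΦ]
    have hWuw : W (u,w) = deg G u + deg G w := by rw [hW]
    have hc1 : deg G u = (δ₁:ℝ) ↔ ndeg G u = δ₁ := by rw [deg_def]; exact Nat.cast_inj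
    have hc2 : deg G w = (δ₁:ℝ) ↔ ndeg G w = δ₁ := by rw [deg_def]; exact Nat.cast_inj
    rw [hΦuw, hWuw]
    exact ⟨hle, by rw [hiff, hc1, hc2]⟩
  have hper2 : ∀ e ∈ N2 G, Φ e ≤ W e / (2*(δ₁:ℝ)) := by
    intro e he
    rw [mem_N2] at he
    rw [hΦe, show W e = W (e.1, e.2) from by rw [Prod.mk.eta]]
    exact (key2 e.1 e.2 he.1 he.2.1 he.2.2).1
  have hsum2 : ∑ e ∈ N2 G, Φ e ≤ ∑ e ∈ N2 G, W e / (2*(δ₁:ℝ)) := Finset.sum_le_sum hper2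
  have hs2iff : (∑ e ∈ N2 G, Φ e = ∑ e ∈ N2 G, W e / (2*(δ₁:ℝ))) ↔
      (∀ u w, G.Adj u w → ndeg G u ≠ 1 → ndeg G w ≠ 1 → ndeg G u = δ₁) := by
    rw [Finset.sum_eq_sum_iff_of_le hper2]
    constructor
    · intro h u w huw hu hw
      have hm2 : (u,w) ∈ N2 G := (mem_N2 G (u,w)).mpr ⟨huw, hu, hw⟩
      exact ((key2 u w huw hu hw).2.mp (h (u,w) hm2)).1
    · intro hCn e he
      rw [mem_N2] at he
      rw [hΦe, show W e = W (e.1, e.2) from by rw [Prod.mk.eta]]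
      exact (key2 e.1 e.2 he.1 he.2.1 he.2.2).2.mpr
        ⟨hCn e.1 e.2 he.1 he.2.1 he.2.2, hCn e.2 e.1 he.1.symm he.2.2 he.2.1⟩
  -- symmetric halving for N2
  have hWsymm : ∀ e ∈ N2 G, W e.swap = W e := by
    intro e _; rw [hW, hW]; exact add_comm _ _
  have hN2W : ∑ e ∈ N2 G, W e = (∑ e ∈ N1, W e) + (∑ e ∈ N1, W e) := by
    have h := sym_half (N2 G) hswap hirr W hWsymm
    rwa [← hN1def] at h
  have hN2W2 : ∑ e ∈ N2 G, (W e)^2 = (∑ e ∈ N1, (W e)^2) + (∑ e ∈ N1, (W e)^2) := by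
    have h := sym_half (N2 G) hswap hirr (fun e => (W e)^2) (fun e he => by simp only [hWsymm e he])
    rwa [← hN1def] at h
  have hmemN1 : ∀ e ∈ N1, e ∈ N2 G := fun e he => (Finset.mem_filter.mp he).1
  have hW0 : ∀ e ∈ N1, 0 ≤ W e := by
    intro e he
    rw [hW]
    have := hd1R e.1; have := hd1R e.2
    linarith
  have hWub : ∀ e ∈ N1, W e ≤ 2*(Δ:ℝ) := by
    intro e he
    rw [hW]
    have := hdΔR e.1; have := hdΔR e.2
    linarith
  -- pendent squares
  have keyQ : ∀ u w, G.Adj u w → ndeg G u = 1 →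
      (((δ₁:ℝ)+1)^2 ≤ (W (u,w))^2 ∧ ((((δ₁:ℝ)+1)^2 = (W (u,w))^2) ↔ ndeg G w = δ₁)) := by
    intro u w huw h1
    have h1R : deg G u = 1 := by rw [deg_def, h1, Nat.cast_one]
    have hw1 : ndeg G w ≠ 1 := by have := hsupp u w huw h1; omega
    have hwδ : (δ₁:ℝ) ≤ deg G w := hδleR w hw1
    have hWuw : W (u,w) = 1 + deg G w := by rw [hW]; dsimp only; rw [h1R]
    have hc : deg G w = (δ₁:ℝ) ↔ ndeg G w = δ₁ := by rw [deg_def]; exact Nat.cast_inj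
    obtain ⟨ha, hb⟩ := sq_pend hδR hwδ
    constructor
    · rw [hWuw]; exact ha
    · rw [hWuw, ← hc, hb]
  have hWsym' : ∀ u w, W (u,w) = W (w,u) := by
    intro u w; rw [hW, hW]; dsimp only; ring
  have hWe : ∀ e : V × V, W e = W (e.1, e.2) := by intro e; rw [Prod.mk.eta]
  have hperQ : ∀ e ∈ P2 G, ((δ₁:ℝ)+1)^2 ≤ (W e)^2 := by
    intro e he
    rw [mem_P2] at he
    rcases he.2 with h | h
    · rw [hWe]; exact (keyQ e.1 e.2 he.1 h).1
    · rw [hWe, hWsym']; exact (keyQ e.2 e.1 he.1.symm h).1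
  have hsQconst : ∑ _e ∈ P2 G, ((δ₁:ℝ)+1)^2 = (2*(p:ℝ)) * ((δ₁:ℝ)+1)^2 := by
    rw [Finset.sum_const, hcardP2, nsmul_eq_mul]
    push_cast; ring
  have hsumQ : (2*(p:ℝ)) * ((δ₁:ℝ)+1)^2 ≤ ∑ e ∈ P2 G, (W e)^2 := by
    rw [← hsQconst]; exact Finset.sum_le_sum hperQ
  have hsQiff : ((2*(p:ℝ)) * ((δ₁:ℝ)+1)^2 = ∑ e ∈ P2 G, (W e)^2) ↔
      (∀ u w, G.Adj u w → ndeg G u = 1 → ndeg G w = δ₁) := by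
    rw [← hsQconst, Finset.sum_eq_sum_iff_of_le hperQ]
    constructor
    · intro h u w huw h1
      refine (keyQ u w huw h1).2.mp ?_
      exact h (u,w) ((mem_P2 G (u,w)).mpr ⟨huw, Or.inl h1⟩)
    · intro hCq e he
      rw [mem_P2] at he
      rcases he.2 with h | h
      · rw [hWe]; exact (keyQ e.1 e.2 he.1 h).2.mpr (hCq e.1 e.2 he.1 h)
      · rw [hWe, hWsym']; exact (keyQ e.2 e.1 he.1.symm h).2.mpr (hCq e.2 e.1 he.1.symm h)
  -- the quantity under the square root
  have hcrossid := cross_id N1 W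
  have hcross_le := cross_le hW0 hWub
  have hXeq2 : forgottenIndex G + 2 * M2 G - p * ((δ₁ : ℝ) + 1) ^ 2 +
      4 * (Δ : ℝ) ^ 2 * ((m : ℝ) - p) * ((m : ℝ) - p - 1) =
      (1/2 * (∑ e ∈ P2 G, (W e)^2) - p * ((δ₁:ℝ)+1)^2) +
      ((∑ e ∈ N1, (W e)^2) + (2*(Δ:ℝ))^2 * N1.card * ((N1.card:ℝ) - 1)) := by
    rw [hFM, hN2W2, hqR]
    ring
  have hT2X : (∑ e ∈ N1, W e)^2 ≤ forgottenIndex G + 2 * M2 G - p * ((δ₁ : ℝ) + 1) ^ 2 +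
      4 * (Δ : ℝ) ^ 2 * ((m : ℝ) - p) * ((m : ℝ) - p - 1) := by
    rw [hXeq2, hcrossid]
    have h1' : 0 ≤ 1/2 * (∑ e ∈ P2 G, (W e)^2) - p * ((δ₁:ℝ)+1)^2 := by linarith
    linarith
  have hcrossiff : (∑ i ∈ N1, ∑ j ∈ N1.erase i, W i * W j =
      (2*(Δ:ℝ))^2 * N1.card * ((N1.card:ℝ) - 1)) ↔
      (2 ≤ N1.card → ∀ e ∈ N1, W e = 2*(Δ:ℝ)) := by
    constructor
    · intro h
      by_contra hC
      push_neg at hC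
      obtain ⟨hc2, e, he, hne⟩ := hC
      exact absurd h (ne_of_lt (cross_lt hW0 hWub (by linarith) hc2
        ⟨e, he, lt_of_le_of_ne (hWub e he) hne⟩))
    · exact fun h => cross_eq h
  have hT2Xiff : ((∑ e ∈ N1, W e)^2 = forgottenIndex G + 2 * M2 G - p * ((δ₁ : ℝ) + 1) ^ 2 +
      4 * (Δ : ℝ) ^ 2 * ((m : ℝ) - p) * ((m : ℝ) - p - 1)) ↔
      ((∀ u w, G.Adj u w → ndeg G u = 1 → ndeg G w = δ₁) ∧
       (2 ≤ N1.card → ∀ e ∈ N1, W e = 2*(Δ:ℝ))) := by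
    rw [← hsQiff, ← hcrossiff]
    constructor
    · intro h
      constructor
      · linarith [hcross_le, hsumQ, hcrossid, hXeq2, h]
      · linarith [hcross_le, hsumQ, hcrossid, hXeq2, h]
    · rintro ⟨h1, h2⟩
      rw [hXeq2, hcrossid, ← h1, h2]
      ring
  -- assembling the inequality
  have hT0 : 0 ≤ ∑ e ∈ N1, W e := Finset.sum_nonneg hW0
  have hXX0 : 0 ≤ forgottenIndex G + 2 * M2 G - p * ((δ₁ : ℝ) + 1) ^ 2 +
      4 * (Δ : ℝ) ^ 2 * ((m : ℝ) - p) * ((m : ℝ) - p - 1) :=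
    le_trans (sq_nonneg _) hT2X
  have hTsqrt : (∑ e ∈ N1, W e) ≤ Real.sqrt (forgottenIndex G + 2 * M2 G -
      p * ((δ₁ : ℝ) + 1) ^ 2 + 4 * (Δ : ℝ) ^ 2 * ((m : ℝ) - p) * ((m : ℝ) - p - 1)) :=
    (Real.le_sqrt hT0 hXX0).mpr hT2X
  have hsum2' : ∑ e ∈ N2 G, W e / (2*(δ₁:ℝ)) =
      ((∑ e ∈ N1, W e) + (∑ e ∈ N1, W e)) / (2*(δ₁:ℝ)) := by
    rw [← Finset.sum_div, hN2W]
  have hδ0 : (0:ℝ) < 2*(δ₁:ℝ) := by linarith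
  have hsqrtnn : 0 ≤ Real.sqrt (forgottenIndex G + 2 * M2 G - p * ((δ₁ : ℝ) + 1) ^ 2 +
      4 * (Δ : ℝ) ^ 2 * ((m : ℝ) - p) * ((m : ℝ) - p - 1)) := Real.sqrt_nonneg _
  have hineq : AG G ≤ (p : ℝ) * ((Δ : ℝ) + 1) / (2 * Real.sqrt Δ) +
      (1 / (2 * (δ₁ : ℝ))) * Real.sqrt (forgottenIndex G + 2 * M2 G -
        p * ((δ₁ : ℝ) + 1) ^ 2 + 4 * (Δ : ℝ) ^ 2 * ((m : ℝ) - p) * ((m : ℝ) - p - 1)) := by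
    rw [hsplitAG]
    have e1 : (p : ℝ) * ((Δ : ℝ) + 1) / (2 * Real.sqrt Δ) =
        1/2 * ((2*(p:ℝ)) * (((Δ:ℝ)+1)/(2*Real.sqrt Δ))) := by ring
    have e2 : 1/2 * (((∑ e ∈ N1, W e) + (∑ e ∈ N1, W e)) / (2*(δ₁:ℝ))) =
        (1 / (2 * (δ₁ : ℝ))) * (∑ e ∈ N1, W e) := by ring
    have e3 : (1 / (2 * (δ₁ : ℝ))) * (∑ e ∈ N1, W e) ≤
        (1 / (2 * (δ₁ : ℝ))) * Real.sqrt (forgottenIndex G + 2 * M2 G -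
          p * ((δ₁ : ℝ) + 1) ^ 2 + 4 * (Δ : ℝ) ^ 2 * ((m : ℝ) - p) * ((m : ℝ) - p - 1)) := by
      apply mul_le_mul_of_nonneg_left hTsqrt
      positivity
    have h2' := hsum2.trans (le_of_eq hsum2')
    linarith
  refine ⟨hineq, ?_⟩
  -- the generic sufficient condition
  have hgen : Δ = δ₁ → (∀ v, ndeg G v = 1 ∨ ndeg G v = Δ) →
      ((∀ u w, G.Adj u w → ndeg G u = 1 → ndeg G w = Δ) ∧
       (∀ u w, G.Adj u w → ndeg G u ≠ 1 → ndeg G w ≠ 1 → ndeg G u = δ₁) ∧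
       (∀ u w, G.Adj u w → ndeg G u = 1 → ndeg G w = δ₁) ∧
       (2 ≤ N1.card → ∀ e ∈ N1, W e = 2*(Δ:ℝ))) := by
    intro hΔδ hall
    have hCp : ∀ u w, G.Adj u w → ndeg G u = 1 → ndeg G w = Δ := by
      intro u w h h1
      refine (hall w).resolve_left ?_
      have := hsupp u w h h1; omega
    refine ⟨hCp, ?_, ?_, ?_⟩
    · intro u w h hu _
      rw [(hall u).resolve_left hu, hΔδ]
    · intro u w h h1
      rw [hCp u w h h1, hΔδ]
    · intro _ e he
      have heN2 := (mem_N2 G e).mp (hmemN1 e he)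
      have h1 : ndeg G e.1 = Δ := (hall e.1).resolve_left heN2.2.1
      have h2 : ndeg G e.2 = Δ := (hall e.2).resolve_left heN2.2.2
      rw [hW, deg_def, deg_def, h1, h2]
      ring
  constructor
  · -- equality implies classification
    intro heq
    rw [hsplitAG] at heq
    have h2' := hsum2.trans (le_of_eq hsum2')
    have e1 : (p : ℝ) * ((Δ : ℝ) + 1) / (2 * Real.sqrt Δ) =
        1/2 * ((2*(p:ℝ)) * (((Δ:ℝ)+1)/(2*Real.sqrt Δ))) := by ring
    have e2 : 1/2 * (((∑ e ∈ N1, W e) + (∑ e ∈ N1, W e)) / (2*(δ₁:ℝ))) =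
        (1 / (2 * (δ₁ : ℝ))) * (∑ e ∈ N1, W e) := by ring
    have e3 : (1 / (2 * (δ₁ : ℝ))) * (∑ e ∈ N1, W e) ≤
        (1 / (2 * (δ₁ : ℝ))) * Real.sqrt (forgottenIndex G + 2 * M2 G -
          p * ((δ₁ : ℝ) + 1) ^ 2 + 4 * (Δ : ℝ) ^ 2 * ((m : ℝ) - p) * ((m : ℝ) - p - 1)) := by
      apply mul_le_mul_of_nonneg_left hTsqrt
      positivity
    have q1 : ∑ e ∈ P2 G, Φ e = (2*(p:ℝ)) * (((Δ:ℝ)+1)/(2*Real.sqrt Δ)) := by linarith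
    have q2 : ∑ e ∈ N2 G, Φ e = ∑ e ∈ N2 G, W e / (2*(δ₁:ℝ)) := by linarith
    have q3 : (1 / (2 * (δ₁ : ℝ))) * (∑ e ∈ N1, W e) =
        (1 / (2 * (δ₁ : ℝ))) * Real.sqrt (forgottenIndex G + 2 * M2 G -
          p * ((δ₁ : ℝ) + 1) ^ 2 + 4 * (Δ : ℝ) ^ 2 * ((m : ℝ) - p) * ((m : ℝ) - p - 1)) := by
      linarith
    have hTeq : (∑ e ∈ N1, W e) = Real.sqrt (forgottenIndex G + 2 * M2 G -
        p * ((δ₁ : ℝ) + 1) ^ 2 + 4 * (Δ : ℝ) ^ 2 * ((m : ℝ) - p) * ((m : ℝ) - p - 1)) :=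
      mul_left_cancel₀ (by positivity) q3
    have hT2 : (∑ e ∈ N1, W e)^2 = forgottenIndex G + 2 * M2 G -
        p * ((δ₁ : ℝ) + 1) ^ 2 + 4 * (Δ : ℝ) ^ 2 * ((m : ℝ) - p) * ((m : ℝ) - p - 1) := by
      rw [hTeq, Real.sq_sqrt hXX0]
    have hCp := hs1iff.mp q1
    have hCn := hs2iff.mp q2
    obtain ⟨hCq, _⟩ := hT2Xiff.mp hT2
    -- classification
    by_cases hex : ∃ u, ndeg G u = 1
    · obtain ⟨u₀, hu₀⟩ := hex
      obtain ⟨w₀, hw₀⟩ := hexadj u₀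
      have hΔδ : Δ = δ₁ := by rw [← hCp u₀ w₀ hw₀ hu₀, hCq u₀ w₀ hw₀ hu₀]
      right; right
      refine ⟨{v | ndeg G v = Δ}, {v | ndeg G v = 1}, ⟨w₀, hCp u₀ w₀ hw₀ hu₀⟩, ⟨u₀, hu₀⟩,
        ?_, ?_, fun v hv => hv, fun v hv => hv⟩
      · rw [Set.disjoint_left]
        intro a ha hb
        simp only [Set.mem_setOf_eq] at ha hb
        omega
      · apply Set.eq_univ_of_forall
        intro v
        by_cases h1 : ndeg G v = 1
        · exact Or.inr h1
        · left
          obtain ⟨w, hw⟩ := hexadj v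
          by_cases hw1 : ndeg G w = 1
          · exact hCp w v hw.symm hw1
          · have hd := hCn v w hw h1 hw1
            show ndeg G v = Δ
            omega
    · push_neg at hex
      right; left
      refine ⟨δ₁, fun v => ?_⟩
      obtain ⟨w, hw⟩ := hexadj v
      exact hCn v w hw (hex v) (hex w)
  · -- classification implies equality
    intro hclass
    have hCs : (∀ u w, G.Adj u w → ndeg G u = 1 → ndeg G w = Δ) ∧
        (∀ u w, G.Adj u w → ndeg G u ≠ 1 → ndeg G w ≠ 1 → ndeg G u = δ₁) ∧
        (∀ u w, G.Adj u w → ndeg G u = 1 → ndeg G w = δ₁) ∧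
        (2 ≤ N1.card → ∀ e ∈ N1, W e = 2*(Δ:ℝ)) := by
      rcases hclass with hiso | ⟨r, hr⟩ | hsemi
      · -- star
        obtain ⟨ψ⟩ := hiso
        have hstar : ∀ v : V, ndeg G v = 1 ∨ ndeg G v = n - 1 := by
          intro v
          have hcongr : ndeg G v =
              Fintype.card ((completeBipartiteGraph (Fin 1) (Fin (n-1))).neighborSet (ψ v)) := by
            rw [ndeg_eq, ← card_neighborSet_eq_degree]
            exact Fintype.card_congr (ψ.mapNeighborSet v)
          rcases hψv : ψ v with a | b
          · right
            rw [hcongr, hψv]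
            have hset : (completeBipartiteGraph (Fin 1) (Fin (n-1))).neighborSet (Sum.inl a) =
                Set.range Sum.inr := by
              ext y; cases y <;> simp
            exact (Fintype.card_congr ((Equiv.setCongr hset).trans
              (Equiv.ofInjective Sum.inr Sum.inr_injective).symm)).trans (Fintype.card_fin _)
          · left
            rw [hcongr, hψv]
            have hset : (completeBipartiteGraph (Fin 1) (Fin (n-1))).neighborSet (Sum.inr b) =
                Set.range Sum.inl := by
              ext y; cases y <;> simp
            exact (Fintype.card_congr ((Equiv.setCongr hset).trans
              (Equiv.ofInjective Sum.inl Sum.inl_injective).symm)).trans (Fintype.card_fin _)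
        have hδn : δ₁ = n - 1 := by
          rcases hstar v₀ with h | h <;> omega
        have hΔn : Δ = n - 1 := by
          obtain ⟨vΔ, hvΔ⟩ := hΔmem
          rcases hstar vΔ with h | h <;> omega
        refine hgen (by omega) (fun v => ?_)
        rcases hstar v with h | h
        · exact Or.inl h
        · exact Or.inr (by omega)
      · -- regular
        have hrδ : r = δ₁ := by rw [← hv₀, hr v₀]
        have hΔr : Δ = r := by
          obtain ⟨vΔ, hvΔ⟩ := hΔmem
          rw [← hvΔ, hr vΔ]
        exact hgen (by omega) (fun v => Or.inr (by rw [hr v, hΔr]))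
      · -- semiregular
        obtain ⟨V₁, V₂, _, _, _, huniv, hdeg1, hdeg2⟩ := hsemi
        have hall : ∀ v, ndeg G v = 1 ∨ ndeg G v = Δ := by
          intro v
          have hv : v ∈ V₁ ∪ V₂ := huniv ▸ Set.mem_univ v
          rcases hv with hv | hv
          · exact Or.inr (hdeg1 v hv)
          · exact Or.inl (hdeg2 v hv)
        have hΔδ : Δ = δ₁ := by
          have hv : v₀ ∈ V₁ ∪ V₂ := huniv ▸ Set.mem_univ v₀
          rcases hv with hv | hv
          · rw [← hdeg1 v₀ hv, hv₀]
          · have := hdeg2 v₀ hv; omega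
        exact hgen hΔδ hall
    obtain ⟨hCp, hCn, hCq, hCc⟩ := hCs
    have q1 : ∑ e ∈ P2 G, Φ e = (2*(p:ℝ)) * (((Δ:ℝ)+1)/(2*Real.sqrt Δ)) := hs1iff.mpr hCp
    have q2 : ∑ e ∈ N2 G, Φ e = ∑ e ∈ N2 G, W e / (2*(δ₁:ℝ)) := hs2iff.mpr hCn
    have hT2 : (∑ e ∈ N1, W e)^2 = forgottenIndex G + 2 * M2 G -
        p * ((δ₁ : ℝ) + 1) ^ 2 + 4 * (Δ : ℝ) ^ 2 * ((m : ℝ) - p) * ((m : ℝ) - p - 1) :=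
      hT2Xiff.mpr ⟨hCq, hCc⟩
    have hTeq : Real.sqrt (forgottenIndex G + 2 * M2 G - p * ((δ₁ : ℝ) + 1) ^ 2 +
        4 * (Δ : ℝ) ^ 2 * ((m : ℝ) - p) * ((m : ℝ) - p - 1)) = ∑ e ∈ N1, W e := by
      rw [← hT2, Real.sqrt_sq hT0]
    rw [hsplitAG, q1, q2, hsum2', hTeq]
    ring
end

section
/- Let G be a finite simple connected graph of order n and size m with minimum degree δ ≥ 2. Then AG(G) ≤ (m/2)·(√((n−1)/2) + √(2/(n−1))), with equality if and only if G is isomorphic to the complete graph K₃. -/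
/-!
All degrees lie in `[2, n - 1]`, so the ratio `t = d_u / d_v` of the end degrees of an edge lies
in `[1 / A, A]` with `A = (n - 1) / 2`. Writing `s = √t` and `B = √A`, the identity
`B + B⁻¹ - (s + s⁻¹) = (B - s)(sB - 1)/(sB)` shows that `s + s⁻¹` is largest exactly at the
endpoints; summing over the `m` edges gives the bound.

Equality forces every edge to join a vertex of degree 2 to a universal vertex. If `n ≥ 4`, take a
universal vertex `a` and any `b ≠ a`: then `b` has degree 2, its neighbour `c ≠ a` is adjacent to
`a` and so also has degree 2, and the edge `bc` breaks the pattern. Hence `n = 3`, and `δ ≥ 2`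
makes the graph complete.
-/

open SimpleGraph

open Real

lemma add_inv_sub_add_inv {s B : ℝ} (hs : 0 < s) (hB : 0 < B) :
    B + B⁻¹ - (s + s⁻¹) = (B - s) * (s * B - 1) / (s * B) := by
  field_simp
  ring

lemma add_inv_le_add_inv {s B : ℝ} (hs : 0 < s) (hBs : B⁻¹ ≤ s) (hsB : s ≤ B) :
    s + s⁻¹ ≤ B + B⁻¹ := by
  have hB : 0 < B := hs.trans_le hsB
  have hsB' : 1 ≤ s * B := by rwa [inv_le_iff_one_le_mul₀ hB] at hBs
  have := add_inv_sub_add_inv hs hB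
  have : 0 ≤ (B - s) * (s * B - 1) / (s * B) := by
    apply div_nonneg <;> nlinarith
  linarith

lemma add_inv_lt_add_inv {s B : ℝ} (hs : 0 < s) (hBs : B⁻¹ < s) (hsB : s < B) :
    s + s⁻¹ < B + B⁻¹ := by
  have hB : 0 < B := hs.trans hsB
  have hsB' : 1 < s * B := by rwa [inv_lt_iff_one_lt_mul₀ hB] at hBs
  have := add_inv_sub_add_inv hs hB
  have : 0 < (B - s) * (s * B - 1) / (s * B) := by
    apply div_pos <;> nlinarith
  linarith

section SqrtRatio

variable {a b x y : ℝ}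

lemma sqrt_div_eq_inv_sqrt_div (x y : ℝ) : √(y / x) = (√(x / y))⁻¹ := by
  rw [← Real.sqrt_inv, inv_div]

lemma sqrt_div_add_sqrt_div_le (ha : 0 < a) (hx : x ∈ Set.Icc a b) (hy : y ∈ Set.Icc a b) :
    √(x / y) + √(y / x) ≤ √(b / a) + √(a / b) := by
  have hxpos : 0 < x := ha.trans_le hx.1
  have hypos : 0 < y := ha.trans_le hy.1
  have hb : 0 < b := hxpos.trans_le hx.2
  rw [sqrt_div_eq_inv_sqrt_div x y, sqrt_div_eq_inv_sqrt_div b a]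
  refine add_inv_le_add_inv (by positivity) ?_ (Real.sqrt_le_sqrt ?_)
  · rw [← sqrt_div_eq_inv_sqrt_div]
    exact Real.sqrt_le_sqrt ((div_le_div_iff₀ hb hypos).2 (by nlinarith [hx.1, hy.2]))
  · exact (div_le_div_iff₀ hypos ha).2 (by nlinarith [hx.2, hy.1])

lemma mul_lt_mul_of_mem_Icc (ha : 0 < a) (hx : x ∈ Set.Icc a b) (hy : y ∈ Set.Icc a b)
    (hxy : ¬(x = b ∧ y = a)) : x * a < b * y := by
  have hb : 0 < b := ha.trans_le (hx.1.trans hx.2)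
  refine lt_of_le_of_ne (by nlinarith [hx.2, hy.1]) fun h => hxy ⟨?_, ?_⟩ <;>
    nlinarith [hx.2, hy.1]

lemma sqrt_div_add_sqrt_div_lt (ha : 0 < a) (hx : x ∈ Set.Icc a b) (hy : y ∈ Set.Icc a b)
    (hab : ¬(x = a ∧ y = b)) (hba : ¬(x = b ∧ y = a)) :
    √(x / y) + √(y / x) < √(b / a) + √(a / b) := by
  have hxpos : 0 < x := ha.trans_le hx.1
  have hypos : 0 < y := ha.trans_le hy.1
  have hb : 0 < b := hxpos.trans_le hx.2
  rw [sqrt_div_eq_inv_sqrt_div x y, sqrt_div_eq_inv_sqrt_div b a]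
  refine add_inv_lt_add_inv (by positivity) ?_ (Real.sqrt_lt_sqrt (by positivity) ?_)
  · rw [← sqrt_div_eq_inv_sqrt_div]
    refine Real.sqrt_lt_sqrt (by positivity) ((div_lt_div_iff₀ hb hypos).2 ?_)
    have := mul_lt_mul_of_mem_Icc ha hy hx fun h => hab ⟨h.2, h.1⟩
    linarith
  · exact (div_lt_div_iff₀ hypos ha).2 (mul_lt_mul_of_mem_Icc ha hx hy hba)

end SqrtRatio

section Graph

variable {V : Type*} [Fintype V] (G : SimpleGraph V)

lemma ndeg_eq_degree [DecidableRel G.Adj] (v : V) : ndeg G v = G.degree v := by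
  unfold ndeg
  convert rfl

lemma deg_le_card_sub_one (v : V) : deg G v ≤ Fintype.card V - 1 := by
  classical
  have := G.degree_lt_card_verts v
  rw [deg, ndeg_eq_degree, le_sub_iff_add_le]
  exact_mod_cast this

lemma edgeSum_le_edgeSum {f g : ℝ → ℝ → ℝ}
    (h : ∀ u w, G.Adj u w → f (deg G u) (deg G w) ≤ g (deg G u) (deg G w)) :
    edgeSum G f ≤ edgeSum G g := by
  unfold edgeSum
  gcongr with u _ w _
  split_ifs with huw
  exacts [h u w huw, le_rfl]

lemma edgeSum_lt_edgeSum {f g : ℝ → ℝ → ℝ}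
    (h : ∀ u w, G.Adj u w → f (deg G u) (deg G w) ≤ g (deg G u) (deg G w))
    {u w : V} (huw : G.Adj u w) (hlt : f (deg G u) (deg G w) < g (deg G u) (deg G w)) :
    edgeSum G f < edgeSum G g := by
  classical
  have hle : ∀ u w, (if G.Adj u w then f (deg G u) (deg G w) else 0) ≤
      if G.Adj u w then g (deg G u) (deg G w) else 0 := fun u w => by
    split_ifs with huw
    exacts [h u w huw, le_rfl]
  unfold edgeSum
  refine mul_lt_mul_of_pos_left
    (Finset.sum_lt_sum (fun u _ => Finset.sum_le_sum fun w _ => hle u w)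
      ⟨u, Finset.mem_univ u, Finset.sum_lt_sum (fun w _ => hle u w) ⟨w, Finset.mem_univ w, ?_⟩⟩)
    one_half_pos
  simpa [huw] using hlt

lemma edgeSum_const (c : ℝ) : edgeSum G (fun _ _ => c) = G.edgeSet.ncard * c := by
  classical
  unfold edgeSum
  have hrow : ∀ u, (∑ w, if G.Adj u w then c else 0) = G.degree u * c := fun u => by
    rw [← Finset.sum_filter, Finset.sum_const, nsmul_eq_mul, ← neighborFinset_eq_filter,
      card_neighborFinset_eq_degree]
  have hm : G.edgeSet.ncard = G.edgeFinset.card := by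
    rw [← coe_edgeFinset, Set.ncard_coe_finset]
  simp only [hrow, ← Finset.sum_mul]
  rw [← Nat.cast_sum, sum_degrees_eq_twice_card_edges, hm]
  push_cast
  ring

lemma eq_top_of_forall_card_sub_one_le_degree [DecidableRel G.Adj]
    (h : ∀ v, Fintype.card V - 1 ≤ G.degree v) : G = ⊤ :=
  eq_top_iff_forall_isUniversal.2 fun v => (degree_eq_card_sub_one G v).1 <|
    le_antisymm (Nat.le_sub_one_of_lt (G.degree_lt_card_verts v)) (h v)

lemma nonempty_iso_top_fin_three (hδ : ∀ v, 2 ≤ ndeg G v) (h3 : Fintype.card V = 3) :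
    Nonempty (G ≃g (⊤ : SimpleGraph (Fin 3))) := by
  classical
  obtain rfl : G = ⊤ := eq_top_of_forall_card_sub_one_le_degree G fun v => by
    rw [h3, ← ndeg_eq_degree]
    exact hδ v
  exact ⟨Iso.completeGraph (Fintype.equivOfCardEq (by rw [h3, Fintype.card_fin]))⟩

lemma card_eq_three_of_forall_adj [Nonempty V] (hδ : ∀ v, 2 ≤ ndeg G v)
    (hext : ∀ u w, G.Adj u w → deg G u = 2 ∧ deg G w = Fintype.card V - 1 ∨
      deg G u = Fintype.card V - 1 ∧ deg G w = 2) :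
    Fintype.card V = 3 := by
  classical
  have hfull : ∀ v, deg G v = Fintype.card V - 1 ↔ G.degree v + 1 = Fintype.card V := fun v => by
    rw [deg, ndeg_eq_degree, eq_sub_iff_add_eq]
    norm_cast
  have htwo : ∀ v, deg G v = 2 ↔ G.degree v = 2 := fun v => by
    rw [deg, ndeg_eq_degree]
    norm_cast
  simp only [hfull, htwo] at hext
  simp only [ndeg_eq_degree] at hδ
  have hlt : ∀ v, G.degree v < Fintype.card V := G.degree_lt_card_verts
  obtain ⟨v⟩ := ‹Nonempty V›
  obtain ⟨w, hvw⟩ := (G.degree_pos_iff_exists_adj v).1 (by grind)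
  obtain ⟨a, ha⟩ : ∃ a, G.degree a + 1 = Fintype.card V := by
    rcases hext v w hvw with h | h
    exacts [⟨w, h.2⟩, ⟨v, h.1⟩]
  by_contra hne
  have hua : G.IsUniversal a := (degree_eq_card_sub_one G a).1 (by omega)
  have hnbr : ∀ b, a ≠ b → G.degree b = 2 := fun b hb => by
    rcases hext a b (hua hb) with h | h <;> omega
  obtain ⟨b, hba⟩ := Fintype.exists_ne_of_one_lt_card (by grind) a
  obtain ⟨c, hbc, hca⟩ := Finset.exists_mem_ne (s := G.neighborFinset b)
    (by rw [card_neighborFinset_eq_degree, hnbr b hba.symm]; norm_num) a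
  rw [mem_neighborFinset] at hbc
  have := hnbr b hba.symm
  have := hnbr c hca.symm
  rcases hext b c hbc with h | h <;> omega

end Graph

/-- Corollary 3 of the paper. -/
theorem stmt5 {V : Type*} [Fintype V] (G : SimpleGraph V) (hG : G.Connected)
    (n m : ℕ)
    (hn : Fintype.card V = n) (hm : G.edgeSet.ncard = m)
    (hδ : ∀ v : V, 2 ≤ ndeg G v) :
    AG G ≤ ((m : ℝ) / 2) *
      (Real.sqrt (((n : ℝ) - 1) / 2) + Real.sqrt (2 / ((n : ℝ) - 1))) ∧
    (AG G = ((m : ℝ) / 2) *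
      (Real.sqrt (((n : ℝ) - 1) / 2) + Real.sqrt (2 / ((n : ℝ) - 1))) ↔
      Nonempty (G ≃g (⊤ : SimpleGraph (Fin 3)))) := by
  subst hn hm
  have := hG.nonempty
  have hdeg : ∀ v, deg G v ∈ Set.Icc 2 ((Fintype.card V : ℝ) - 1) :=
    fun v => ⟨Nat.ofNat_le_cast.2 (hδ v), deg_le_card_sub_one G v⟩
  set B := √(((Fintype.card V : ℝ) - 1) / 2) + √(2 / ((Fintype.card V : ℝ) - 1))
  rw [show (G.edgeSet.ncard / 2 : ℝ) * B = edgeSum G fun _ _ => B / 2 by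
    rw [edgeSum_const]; ring]
  have hterm : ∀ u w, G.Adj u w → (√(deg G u / deg G w) + √(deg G w / deg G u)) / 2 ≤ B / 2 :=
    fun u w _ => by gcongr; exact sqrt_div_add_sqrt_div_le two_pos (hdeg u) (hdeg w)
  have hle : AG G ≤ edgeSum G fun _ _ => B / 2 := edgeSum_le_edgeSum G hterm
  refine ⟨hle, fun heq => nonempty_iso_top_fin_three G hδ ?_, fun ⟨φ⟩ => ?_⟩
  · refine card_eq_three_of_forall_adj G hδ fun u w huw => ?_
    by_contra hne
    rw [not_or] at hne
    refine (edgeSum_lt_edgeSum G hterm huw ?_).ne heq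
    gcongr
    exact sqrt_div_add_sqrt_div_lt two_pos (hdeg u) (hdeg w) hne.1 hne.2
  · have h3 : (Fintype.card V : ℝ) - 1 = 2 := by
      rw [Fintype.card_congr φ.toEquiv, Fintype.card_fin]; norm_num
    have h2 : ∀ v, deg G v = 2 := fun v => le_antisymm ((hdeg v).2.trans h3.le) (hdeg v).1
    refine le_antisymm hle (edgeSum_le_edgeSum G fun u w _ => ?_)
    simp only [B, h3, h2, le_refl]
end
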